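/- arXiv:2104.01959 — 2 statements merged into one kernel-verified Lean document; each statement's English description precedes it below -/
import Mathlib

section
/- Any fixed point of the modified system G_m is consensus-optimal in x: suppose (w₁, ŵ₂, x, ŷ, u, v) ∈ (ℝⁿ)⁶ satisfies w₁ = w₁ − αu − ζv, ŵ₂ = (I−Π)w₁ + (I−Π)ŵ₂ − (I−Π)v, x = w₁ − v, ŷ = δw₁ + ηŵ₂, u = ∇F(x) (componentwise uᵢ = ∇fᵢ(xᵢ)), v = Lŷ, with α ≠ 0, ζ ≠ 0, L𝟙 = 0, 𝟙ᵀL = 0. Then (I−Π)x = 0 (all xᵢ equal) and Σᵢ ∇fᵢ(xᵢ) = 0. -/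
open Matrix

/-- Any fixed point of the modified system `G_m` is consensus-optimal:
`(I−Π)x = 0` (all `xᵢ` equal) and `Σᵢ ∇fᵢ(xᵢ) = 0`. -/
theorem stmt8 (n : ℕ) (hn : 1 ≤ n)
    (f g : Fin n → ℝ → ℝ) (hderiv : ∀ i x, HasDerivAt (f i) (g i x) x)
    (L Pi : Matrix (Fin n) (Fin n) ℝ)
    (hPi : Pi = Matrix.of fun _ _ => (n : ℝ)⁻¹)
    (hL1 : L.mulVec 1 = 0) (hL2 : Matrix.vecMul 1 L = 0)
    (α ζ δ η : ℝ) (hα : α ≠ 0) (hζ : ζ ≠ 0)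
    (w₁ w2hat x yhat u v : Fin n → ℝ)
    (e1 : w₁ = w₁ - α • u - ζ • v)
    (e2 : w2hat = (1 - Pi).mulVec w₁ + (1 - Pi).mulVec w2hat - (1 - Pi).mulVec v)
    (e3 : x = w₁ - v)
    (e4 : yhat = δ • w₁ + η • w2hat)
    (e5 : u = fun i => g i (x i))
    (e6 : v = L.mulVec yhat) :
    (1 - Pi).mulVec x = 0 ∧ ∑ i, g i (x i) = 0 := by
  have hn0 : (n : ℝ) ≠ 0 := Nat.cast_ne_zero.mpr (by omega)
  -- sum of v is zero
  have hsumv : ∑ i, v i = 0 := by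
    have h1 : (1 : Fin n → ℝ) ⬝ᵥ L.mulVec yhat = Matrix.vecMul 1 L ⬝ᵥ yhat :=
      Matrix.dotProduct_mulVec _ _ _
    rw [hL2] at h1
    simpa [e6, dotProduct] using h1
  -- Pi squared is Pi
  have hPisq : Pi * Pi = Pi := by
    ext i j
    simp [hPi, Matrix.mul_apply, Finset.sum_const, Finset.card_univ]
    field_simp
  -- Pi annihilates w2hat
  have hPw2 : Pi.mulVec w2hat = 0 := by
    have h := congrArg Pi.mulVec e2
    have hz : Pi * (1 - Pi) = 0 := by
      rw [Matrix.mul_sub, Matrix.mul_one, hPisq, sub_self]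
    simp only [Matrix.mulVec_add, Matrix.mulVec_sub, Matrix.mulVec_mulVec, hz] at h
    simpa using h
  -- (1-Pi) w2hat = w2hat
  have hw2 : (1 - Pi).mulVec w2hat = w2hat := by
    rw [Matrix.sub_mulVec, hPw2, Matrix.one_mulVec, sub_zero]
  refine ⟨?_, ?_⟩
  · rw [e3, Matrix.mulVec_sub]
    rw [hw2] at e2
    funext i
    have h := congrFun e2 i
    simp only [_root_.Pi.add_apply, _root_.Pi.sub_apply, _root_.Pi.zero_apply] at h ⊢
    linarith
  · have hu : ∀ i, u i = -(ζ/α) * v i := by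
      intro i
      have h := congrFun e1 i
      simp only [_root_.Pi.sub_apply, _root_.Pi.smul_apply, smul_eq_mul] at h
      field_simp
      linear_combination h
    have : ∑ i, g i (x i) = ∑ i, u i := by rw [e5]
    rw [this]
    simp_rw [hu]
    rw [← Finset.mul_sum, hsumv, mul_zero]
end

section
/- Existence of an optimal fixed point: given x_opt ∈ ℝ with Σᵢ ∇fᵢ(x_opt) = 0, define x⋆ = 𝟙x_opt, u⋆ with uᵢ⋆ = ∇fᵢ(x_opt), v⋆ = −(α/ζ)u⋆, w₁⋆ = x⋆ + v⋆. If L is a weight-balanced Laplacian of a strongly connected graph (so 𝟙ᵀu⋆ = 0 implies u⋆ ∈ range(L)) and ζη ≠ 0, then there exists ŵ₂⋆ in the row space of L with ζηLŵ₂⋆ = −α(I − δL)u⋆, and setting ŷ⋆ = δw₁⋆ + ηŵ₂⋆ yields a fixed point of G_m. -/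
open Matrix

/-!
Since `Σᵢ u⋆ᵢ = 0` and `𝟙ᵀL = 0`, the vector `−α(I − δL)u⋆/(ζη)` sums to zero, i.e. it is
orthogonal to `ker Lᵀ = span 𝟙`, so by the Fredholm alternative it equals `Lz` for some `z`.
Then `ŵ₂⋆ = (I − Π)z` sums to zero and still satisfies `Lŵ₂⋆ = Lz` because `Πz` is constant.
The fixed-point equations reduce to `Lx⋆ = 0`, `Πx⋆ = x⋆` and `Πŵ₂⋆ = 0`.
-/

theorem Matrix.exists_mulVec_eq_of_forall_vecMul_eq_zero {K m n : Type*} [Field K] [Fintype m]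
    [Fintype n] (A : Matrix m n K) (b : m → K)
    (hb : ∀ w, vecMul w A = 0 → w ⬝ᵥ b = 0) : ∃ z, A *ᵥ z = b := by
  classical
  by_contra! hz
  have hb_range : b ∉ LinearMap.range A.mulVecLin := by
    rintro ⟨z, rfl⟩
    exact hz z rfl
  obtain ⟨f, hfb, hrange⟩ := Submodule.exists_le_ker_of_notMem hb_range
  set w := (dotProductEquiv K m).symm f
  have hf : ∀ v, f v = w ⬝ᵥ v := fun v => by
    rw [← dotProductEquiv_apply_apply, LinearEquiv.apply_symm_apply]
  have hwA : vecMul w A = 0 := by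
    ext j
    have hcol : w ⬝ᵥ A.col j = 0 := by
      simpa [hf] using hrange ⟨Pi.single j 1, rfl⟩
    exact hcol
  exact hfb (by rw [hf, hb w hwA])

theorem Matrix.mulVec_const_eq_zero {R m n : Type*} [CommSemiring R] [Fintype n]
    {A : Matrix m n R} (hA : A *ᵥ 1 = 0) (c : R) : A *ᵥ (fun _ => c) = 0 := by
  have hc : (fun _ => c) = c • (1 : n → R) := by ext; simp
  rw [hc, mulVec_smul, hA, smul_zero]

theorem Matrix.sum_mulVec_eq_zero {R m n : Type*} [CommSemiring R] [Fintype m] [Fintype n]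
    {A : Matrix m n R} (hA : vecMul 1 A = 0) (v : n → R) : ∑ i, (A *ᵥ v) i = 0 := by
  rw [← one_dotProduct, dotProduct_mulVec, hA, zero_dotProduct]

theorem Matrix.exists_mulVec_eq_of_sum_eq_zero {K n : Type*} [Field K] [Fintype n]
    {A : Matrix n n K} (hA : ∀ w, vecMul w A = 0 → ∃ c : K, w = c • 1)
    {b : n → K} (hb : ∑ i, b i = 0) : ∃ z, A *ᵥ z = b := by
  refine A.exists_mulVec_eq_of_forall_vecMul_eq_zero b fun w hw => ?_
  obtain ⟨c, rfl⟩ := hA w hw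
  rw [smul_dotProduct, one_dotProduct, hb, smul_zero]

section Averaging

variable {K ι : Type*} [Field K] [Fintype ι]

variable (K ι) in
def averagingMatrix : Matrix ι ι K := of fun _ _ => (Fintype.card ι : K)⁻¹

theorem averagingMatrix_mulVec (v : ι → K) :
    averagingMatrix K ι *ᵥ v = fun _ => (Fintype.card ι : K)⁻¹ * ∑ i, v i := by
  ext
  simp [averagingMatrix, mulVec, dotProduct, Finset.mul_sum]

theorem averagingMatrix_mulVec_const [CharZero K] (c : K) :
    averagingMatrix K ι *ᵥ (fun _ => c) = fun _ => c := by
  ext i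
  have : Nonempty ι := ⟨i⟩
  simp [averagingMatrix_mulVec]

theorem averagingMatrix_mulVec_eq_zero {v : ι → K} (hv : ∑ i, v i = 0) :
    averagingMatrix K ι *ᵥ v = 0 := by
  rw [averagingMatrix_mulVec, hv, mul_zero]
  rfl

theorem sum_one_sub_averagingMatrix_mulVec [CharZero K] [DecidableEq ι] (v : ι → K) :
    ∑ i, ((1 - averagingMatrix K ι) *ᵥ v) i = 0 := by
  rcases isEmpty_or_nonempty ι with hι | hι
  · simp
  · simp [sub_mulVec, averagingMatrix_mulVec, Finset.sum_sub_distrib]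

end Averaging

theorem stmt11_general (n : ℕ)
    (g : Fin n → ℝ → ℝ)
    (xopt : ℝ) (hopt : ∑ i, g i xopt = 0)
    (L Pi : Matrix (Fin n) (Fin n) ℝ)
    (hPi : Pi = Matrix.of fun _ _ => (n : ℝ)⁻¹)
    (hL1 : L.mulVec 1 = 0) (hL2 : Matrix.vecMul 1 L = 0)
    (hkerT : ∀ w : Fin n → ℝ, Matrix.vecMul w L = 0 → ∃ c : ℝ, w = c • (1 : Fin n → ℝ))
    (α ζ η δ : ℝ) (hζη : ζ * η ≠ 0) :
    let xs : Fin n → ℝ := fun _ => xopt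
    let us : Fin n → ℝ := fun i => g i xopt
    let vs : Fin n → ℝ := (-(α/ζ)) • us
    let w1s : Fin n → ℝ := xs + vs
    ∃ w2s : Fin n → ℝ,
      (∑ i, w2s i = 0) ∧
      (ζ*η) • L.mulVec w2s = (-α) • ((1 - δ • L).mulVec us) ∧
      (0 : Fin n → ℝ) = -(α • us) - ζ • vs ∧
      w2s = (1 - Pi).mulVec (w1s + w2s - vs) ∧
      xs = w1s - vs ∧
      vs = L.mulVec (δ • w1s + η • w2s) := by
  intro xs us vs w1s
  have hζ : ζ ≠ 0 := left_ne_zero_of_mul hζη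
  have hη : η ≠ 0 := right_ne_zero_of_mul hζη
  have hPi_avg : Pi = averagingMatrix ℝ (Fin n) := by simp [hPi, averagingMatrix]
  subst hPi_avg
  set b : Fin n → ℝ := (ζ * η)⁻¹ • (-α) • ((1 - δ • L) *ᵥ us)
  have hb : ∑ i, b i = 0 := by
    simp [b, sub_mulVec, smul_mulVec, Finset.sum_sub_distrib, ← Finset.mul_sum,
      sum_mulVec_eq_zero hL2, us, hopt]
  obtain ⟨z, hz⟩ := exists_mulVec_eq_of_sum_eq_zero hkerT hb
  set w2s := (1 - averagingMatrix ℝ (Fin n)) *ᵥ z with hw2s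
  have hw2_sum : ∑ i, w2s i = 0 := sum_one_sub_averagingMatrix_mulVec z
  have hLw2 : L *ᵥ w2s = b := by
    rw [hw2s, sub_mulVec, one_mulVec, mulVec_sub, hz, averagingMatrix_mulVec,
      mulVec_const_eq_zero hL1, sub_zero]
  refine ⟨w2s, hw2_sum, ?_, ?_, ?_, ?_, ?_⟩
  · rw [hLw2, smul_smul, mul_inv_cancel₀ hζη, one_smul]
  · have hζvs : ζ • vs = -(α • us) := by
      rw [show vs = (-(α / ζ)) • us from rfl, smul_smul, mul_neg, mul_div_cancel₀ α hζ, neg_smul]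
    rw [hζvs, sub_self]
  · have hPxs : averagingMatrix ℝ (Fin n) *ᵥ xs = xs := averagingMatrix_mulVec_const xopt
    rw [add_sub_right_comm, add_sub_cancel_right, sub_mulVec, one_mulVec, mulVec_add, hPxs,
      averagingMatrix_mulVec_eq_zero hw2_sum]
    abel
  · exact (add_sub_cancel_right xs vs).symm
  · rw [mulVec_add, mulVec_smul, mulVec_smul, mulVec_add, mulVec_const_eq_zero hL1, hLw2]
    ext i
    simp only [b, vs, neg_smul, Pi.neg_apply, Pi.smul_apply, smul_eq_mul, mulVec_neg, mulVec_smul,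
      zero_add, smul_neg, _root_.mul_inv_rev, sub_mulVec, one_mulVec, smul_mulVec, Pi.add_apply,
      Pi.sub_apply]
    field_simp
    ring

/-- Existence of an optimal fixed point of `G_m`: given `x_opt` with `Σᵢ ∇fᵢ(x_opt) = 0`,
and `L` a weight-balanced Laplacian of a strongly connected graph
(kernels of `L` and `Lᵀ` spanned by `𝟙`), with `ζη ≠ 0`, there exists `ŵ₂⋆` in the
row space of `L` (orthogonal to `𝟙`) solving `ζηLŵ₂⋆ = −α(I − δL)u⋆`, and the
resulting tuple is a fixed point of `G_m`. -/
theorem stmt11 (n : ℕ) (hn : 1 ≤ n)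
    (f g : Fin n → ℝ → ℝ) (hderiv : ∀ i x, HasDerivAt (f i) (g i x) x)
    (xopt : ℝ) (hopt : ∑ i, g i xopt = 0)
    (L Pi : Matrix (Fin n) (Fin n) ℝ)
    (hPi : Pi = Matrix.of fun _ _ => (n : ℝ)⁻¹)
    (hL1 : L.mulVec 1 = 0) (hL2 : Matrix.vecMul 1 L = 0)
    (hker : ∀ w : Fin n → ℝ, L.mulVec w = 0 → ∃ c : ℝ, w = c • (1 : Fin n → ℝ))
    (hkerT : ∀ w : Fin n → ℝ, Matrix.vecMul w L = 0 → ∃ c : ℝ, w = c • (1 : Fin n → ℝ))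
    (α ζ η δ : ℝ) (hζη : ζ * η ≠ 0) :
    let xs : Fin n → ℝ := fun _ => xopt
    let us : Fin n → ℝ := fun i => g i xopt
    let vs : Fin n → ℝ := (-(α/ζ)) • us
    let w1s : Fin n → ℝ := xs + vs
    ∃ w2s : Fin n → ℝ,
      (∑ i, w2s i = 0) ∧
      (ζ*η) • L.mulVec w2s = (-α) • ((1 - δ • L).mulVec us) ∧
      (0 : Fin n → ℝ) = -(α • us) - ζ • vs ∧
      w2s = (1 - Pi).mulVec (w1s + w2s - vs) ∧
      xs = w1s - vs ∧
      vs = L.mulVec (δ • w1s + η • w2s) :=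
  stmt11_general n g xopt hopt L Pi hPi hL1 hL2 hkerT α ζ η δ hζη
end
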